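/- For any integer p ≥ 1, the softmax map is 1-Lipschitz with respect to the Euclidean norm: for all z, w ∈ ℝ^p, (∑_{j=1}^p (softmax(z)_j − softmax(w)_j)²)^{1/2} ≤ (∑_{j=1}^p (z_j − w_j)²)^{1/2}. -/

import Mathlib

/-!
Along the segment `x t = w + t • (z - w)` the function `t ↦ ⟪u, softmax (x t)⟫`, with
`u = softmax z - softmax w`, increases by `‖u‖²` between `t = 0` and `t = 1`. Its derivative is
`⟪u, J (z - w)⟫`, where the Jacobian `J = diag s - s sᵀ` at `s = softmax (x t)` sends `b` to
`s ⊙ (b - ⟪s, b⟫)`. Since `0 ≤ s ≤ 1` and `s` sums to one, `‖J b‖²` is at most the variance of `b`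
under `s`, hence at most `‖b‖²`. The mean value theorem and Cauchy–Schwarz give
`‖u‖⁴ ≤ ‖u‖² ‖z - w‖²`.
-/

noncomputable def softmax {p : ℕ} (z : Fin p → ℝ) : Fin p → ℝ :=
  fun j => Real.exp (z j) / ∑ k, Real.exp (z k)

open Finset

section Weights

variable {ι : Type*} [Fintype ι] {s : ι → ℝ}

lemma sum_mul_sub_sq_le_sum_mul_sq (hs₁ : ∑ i, s i = 1) (b : ι → ℝ) :
    ∑ i, s i * (b i - ∑ k, s k * b k) ^ 2 ≤ ∑ i, s i * b i ^ 2 := by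
  set m := ∑ k, s k * b k
  have hvar : ∑ i, s i * (b i - m) ^ 2 = ∑ i, s i * b i ^ 2 - m ^ 2 := by
    have hexpand : ∀ i, s i * (b i - m) ^ 2 = s i * b i ^ 2 - 2 * m * (s i * b i) + m ^ 2 * s i :=
      fun i => by ring
    simp only [hexpand, sum_add_distrib, sum_sub_distrib, ← mul_sum, hs₁]
    ring
  linarith [sq_nonneg m]

lemma sum_sq_mul_sub_le_sum_sq (hs₀ : ∀ i, 0 ≤ s i) (hs₁ : ∑ i, s i = 1) (b : ι → ℝ) :
    ∑ i, (s i * (b i - ∑ k, s k * b k)) ^ 2 ≤ ∑ i, b i ^ 2 := by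
  have hs_le_one : ∀ i, s i ≤ 1 := fun i =>
    hs₁ ▸ single_le_sum (fun k _ => hs₀ k) (mem_univ i)
  calc ∑ i, (s i * (b i - ∑ k, s k * b k)) ^ 2
      ≤ ∑ i, s i * (b i - ∑ k, s k * b k) ^ 2 := by
        gcongr with i
        rw [mul_pow]
        exact mul_le_mul_of_nonneg_right (sq_le (hs₀ i) (hs_le_one i)) (sq_nonneg _)
    _ ≤ ∑ i, s i * b i ^ 2 := sum_mul_sub_sq_le_sum_mul_sq hs₁ b
    _ ≤ ∑ i, b i ^ 2 := by
        gcongr with i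
        exact mul_le_of_le_one_left (sq_nonneg _) (hs_le_one i)

end Weights

section Softmax

variable {p : ℕ}

noncomputable def softmaxJacobianApply (x b : Fin p → ℝ) : Fin p → ℝ :=
  fun j => softmax x j * (b j - ∑ k, softmax x k * b k)

lemma softmax_nonneg (x : Fin p → ℝ) (j : Fin p) : 0 ≤ softmax x j :=
  div_nonneg (Real.exp_pos _).le (sum_nonneg fun _ _ => (Real.exp_pos _).le)

lemma sum_exp_pos [Nonempty (Fin p)] (x : Fin p → ℝ) : 0 < ∑ k, Real.exp (x k) :=
  sum_pos (fun _ _ => Real.exp_pos _) univ_nonempty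

lemma sum_softmax [Nonempty (Fin p)] (x : Fin p → ℝ) : ∑ j, softmax x j = 1 := by
  simp only [softmax, ← sum_div]
  exact div_self (sum_exp_pos x).ne'

lemma sum_softmaxJacobianApply_sq_le [Nonempty (Fin p)] (x b : Fin p → ℝ) :
    ∑ j, softmaxJacobianApply x b j ^ 2 ≤ ∑ j, b j ^ 2 :=
  sum_sq_mul_sub_le_sum_sq (softmax_nonneg x) (sum_softmax x) b

lemma HasDerivAt.softmax {x : ℝ → Fin p → ℝ} {x' : Fin p → ℝ} {t : ℝ} (hx : HasDerivAt x x' t)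
    (j : Fin p) :
    HasDerivAt (fun t => softmax (x t) j) (softmaxJacobianApply (x t) x' j) t := by
  have : Nonempty (Fin p) := ⟨j⟩
  have hexp : ∀ k, HasDerivAt (fun t => Real.exp (x t k)) (Real.exp (x t k) * x' k) t :=
    fun k => (hasDerivAt_pi.1 hx k).exp
  have hquot := (hexp j).div (HasDerivAt.fun_sum fun k _ => hexp k) (sum_exp_pos (x t)).ne'
  refine hquot.congr_deriv ?_
  have hmean : ∑ k, _root_.softmax (x t) k * x' k
      = (∑ k, Real.exp (x t k) * x' k) / ∑ k, Real.exp (x t k) := by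
    simp only [_root_.softmax, div_mul_eq_mul_div, sum_div]
  rw [softmaxJacobianApply, hmean, _root_.softmax]
  field_simp [(sum_exp_pos (x t)).ne']

end Softmax

theorem softmax_lipschitz_general (p : ℕ) (z w : Fin p → ℝ) :
    Real.sqrt (∑ j, (softmax z j - softmax w j) ^ 2) ≤
      Real.sqrt (∑ j, (z j - w j) ^ 2) := by
  rcases isEmpty_or_nonempty (Fin p) with _ | _
  · simp
  set u : Fin p → ℝ := fun j => softmax z j - softmax w j
  set b : Fin p → ℝ := z - w
  set g : ℝ → ℝ := fun t => ∑ j, u j * softmax (w + t • b) j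
  have hline : ∀ t : ℝ, HasDerivAt (fun t : ℝ => w + t • b) b t := fun t => by
    simpa using ((hasDerivAt_id t).smul_const b).const_add w
  have hg : ∀ t, HasDerivAt g (∑ j, u j * softmaxJacobianApply (w + t • b) b j) t := fun t =>
    HasDerivAt.fun_sum fun j _ => ((hline t).softmax j).const_mul (u j)
  obtain ⟨c, -, hc⟩ := exists_hasDerivAt_eq_slope g _ zero_lt_one
    (fun t _ => (hg t).continuousAt.continuousWithinAt) (fun t _ => hg t)
  have hincrement : ∑ j, u j * softmaxJacobianApply (w + c • b) b j = ∑ j, u j ^ 2 := by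
    rw [hc, sub_zero, div_one, ← sum_sub_distrib]
    refine sum_congr rfl fun j _ => ?_
    simp only [b, one_smul, zero_smul, add_zero, add_sub_cancel, u]
    ring
  have hsq : (∑ j, u j ^ 2) ^ 2 ≤ (∑ j, u j ^ 2) * ∑ j, b j ^ 2 := by
    calc (∑ j, u j ^ 2) ^ 2 = (∑ j, u j * softmaxJacobianApply (w + c • b) b j) ^ 2 := by
          rw [hincrement]
      _ ≤ _ := (sum_mul_sq_le_sq_mul_sq _ _ _).trans
          (mul_le_mul_of_nonneg_left (sum_softmaxJacobianApply_sq_le _ b)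
            (sum_nonneg fun j _ => sq_nonneg _))
  show Real.sqrt (∑ j, u j ^ 2) ≤ Real.sqrt (∑ j, b j ^ 2)
  apply Real.sqrt_le_sqrt
  nlinarith [sum_nonneg fun j (_ : j ∈ univ) => sq_nonneg (u j),
    sum_nonneg fun j (_ : j ∈ univ) => sq_nonneg (b j)]

theorem softmax_lipschitz (p : ℕ) (hp : 1 ≤ p) (z w : Fin p → ℝ) :
    Real.sqrt (∑ j, (softmax z j - softmax w j) ^ 2) ≤
      Real.sqrt (∑ j, (z j - w j) ^ 2) :=
  softmax_lipschitz_general p z w
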